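/- Let G be a simple graph on a vertex type V and let D be a natural number with D ≥ 1 such that every vertex of G has a finite set of neighbours with at most D elements. A finite set S of vertices is called connected if the subgraph of G induced on S is connected, and |S| denotes its cardinality. If κ is a real number with κ ≥ 4·log D + 2·log 2, then for every vertex v the family (exp(−κ·|X|))_X, indexed by the connected finite vertex sets X with v ∈ X, is summable and Σ_X exp(−κ·|X|) ≤ exp(−κ/2). -/

import Mathlib

/-!
A connected finite vertex set `X ∋ v` is traversed by a closed walk at `v` of length
`2 (|X| - 1)` (delete a vertex `u` whose removal keeps `X` connected and splice a detour to `u`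
into the walk for the rest), and the walk determines `X` as its support. So the sum is at most
`e^{-κ} ∑_w e^{-κ |w| / 2}` over closed walks `w` at `v`. There are at most `D^n` walks of
length `n`, so with `q = e^{-κ/2}` and `Dq ≤ 1/2` this is at most `e^{-κ} / (1 - Dq) ≤ 2 q² ≤ q`.
-/

open Real
namespace SimpleGraph

theorem Connected.exists_covering_closed_walk {W : Type*} [Finite W]
    {H : SimpleGraph W} (hH : H.Connected) :
    ∃ (a : W) (c : H.Walk a a), (∀ x, x ∈ c.support) ∧ c.length + 2 = 2 * Nat.card W := by
  classical
  induction hn : Nat.card W generalizing W with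
  | zero => have := hH.nonempty; exact absurd hn Nat.card_pos.ne'
  | succ n ih =>
    obtain ⟨a⟩ := hH.nonempty
    rcases subsingleton_or_nontrivial W with hW | hW
    · have : Nat.card W ≤ 1 := Finite.card_le_one_iff_subsingleton.mpr hW
      exact ⟨a, .nil, fun x => Subsingleton.elim a x ▸ Walk.start_mem_support _,
        by simp; omega⟩
    obtain ⟨u, hu⟩ := hH.exists_connected_induce_compl_singleton_of_finite_nontrivial
    have hcard : Nat.card ({u}ᶜ : Set W) = n := by
      have := Set.ncard_add_ncard_compl {u}
      rw [Set.ncard_singleton, hn] at this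
      rw [Nat.card_coe_set_eq]
      omega
    obtain ⟨a, c, hc, hlen⟩ := ih hu hcard
    obtain ⟨t, hut⟩ := hH.preconnected.exists_adj_of_nontrivial u
    -- rotate the covering walk of `W ∖ {u}` to the neighbour `t`, then detour `t → u → t`
    have hc' : ∀ x ≠ u, x ∈ (c.map (Embedding.induce _).toHom).support := fun x hx => by
      rw [Walk.support_map, List.mem_map]
      exact ⟨⟨x, hx⟩, hc _, rfl⟩
    refine ⟨u, .cons hut (((c.map _).rotate t (hc' t hut.ne.symm)).concat hut.symm),
      fun x => ?_, ?_⟩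
    · by_cases hx : x = u
      · simp [hx]
      · rw [Walk.support_cons, Walk.support_concat]
        exact List.mem_cons_of_mem _ (List.mem_append_left _
          ((Walk.mem_support_rotate_iff _ _ _).mpr (hc' x hx)))
    · rw [Walk.length_cons, Walk.length_concat, Walk.length_rotate, Walk.length_map, hlen]
      omega

variable {V : Type*} {G : SimpleGraph V}

theorem exists_closed_walk_support_eq_of_connected_induce {X : Finset V} {v : V} (hv : v ∈ X)
    (hX : (G.induce (X : Set V)).Connected) :
    ∃ c : G.Walk v v, (∀ x, x ∈ c.support ↔ x ∈ X) ∧ c.length + 2 = 2 * X.card := by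
  classical
  obtain ⟨a, c, hc, hlen⟩ := hX.exists_covering_closed_walk
  set c' := (c.rotate ⟨v, hv⟩ (hc _)).map (Embedding.induce (X : Set V)).toHom
  have hsupp : ∀ x, x ∈ c'.support ↔ x ∈ X := fun x => by
    simp only [c', Walk.support_map, List.mem_map, Walk.mem_support_rotate_iff]
    exact ⟨fun ⟨y, _, hy⟩ => hy ▸ y.2, fun hx => ⟨⟨x, hx⟩, hc _, rfl⟩⟩
  have hlen' : c'.length + 2 = 2 * X.card := by
    simp only [c', Walk.length_map, Walk.length_rotate, hlen, Nat.card_coe_set_eq,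
      Set.ncard_coe_finset]
  exact ⟨c', hsupp, hlen'⟩

theorem card_finsetWalkLength_le [DecidableEq V] [G.LocallyFinite] {D : ℕ}
    (hdeg : ∀ u, G.degree u ≤ D) (n : ℕ) (u v : V) :
    (G.finsetWalkLength n u v).card ≤ D ^ n := by
  induction n generalizing u with
  | zero =>
    rw [finsetWalkLength]
    split_ifs with h
    · subst h
      simp
    · simp
  | succ n ih =>
    rw [finsetWalkLength, pow_succ']
    refine (Finset.card_biUnion_le_card_mul _ _ (D ^ n) fun w _ => ?_).trans ?_
    · simpa using ih w
    · rw [Finset.card_univ, card_neighborSet_eq_degree]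
      exact Nat.mul_le_mul_right _ (hdeg u)

theorem natCard_walk_length_le [G.LocallyFinite] {D : ℕ} (hdeg : ∀ u, G.degree u ≤ D)
    (n : ℕ) (u v : V) : Nat.card {p : G.Walk u v // p.length = n} ≤ D ^ n := by
  classical
  rw [Nat.card_eq_fintype_card]
  exact (card_set_walk_length_eq G u v n).trans_le (card_finsetWalkLength_le hdeg n u v)

theorem tsum_pow_length_fiber_le [G.LocallyFinite] {D : ℕ} (hdeg : ∀ u, G.degree u ≤ D)
    {q : ℝ} (hq : 0 ≤ q) (u v : V) (n : ℕ) :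
    ∑' p : {p : G.Walk u v // p.length = n}, q ^ p.1.length ≤ (D * q) ^ n := by
  calc ∑' p : {p : G.Walk u v // p.length = n}, q ^ p.1.length
      = ∑' _ : {p : G.Walk u v // p.length = n}, q ^ n := tsum_congr fun p => by rw [p.2]
    _ = Nat.card {p : G.Walk u v // p.length = n} * q ^ n := by rw [tsum_const, nsmul_eq_mul]
    _ ≤ D ^ n * q ^ n := by gcongr; exact_mod_cast natCard_walk_length_le hdeg n u v
    _ = (D * q) ^ n := (mul_pow _ _ _).symm

theorem summable_pow_length_sigma [G.LocallyFinite] {D : ℕ} (hdeg : ∀ u, G.degree u ≤ D)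
    {q : ℝ} (hq : 0 ≤ q) (hDq : D * q < 1) (u v : V) :
    Summable fun p : Σ n, {p : G.Walk u v // p.length = n} => q ^ p.2.1.length := by
  classical
  exact (summable_sigma_of_nonneg fun _ => by positivity).mpr ⟨fun _ => .of_finite,
    .of_nonneg_of_le (fun _ => tsum_nonneg fun _ => by positivity)
      (tsum_pow_length_fiber_le hdeg hq u v) (summable_geometric_of_lt_one (by positivity) hDq)⟩

theorem summable_pow_length [G.LocallyFinite] {D : ℕ} (hdeg : ∀ u, G.degree u ≤ D)
    {q : ℝ} (hq : 0 ≤ q) (hDq : D * q < 1) (u v : V) :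
    Summable fun p : G.Walk u v => q ^ p.length :=
  (Equiv.sigmaFiberEquiv fun p : G.Walk u v => p.length).summable_iff.mp
    (summable_pow_length_sigma hdeg hq hDq u v)

theorem tsum_pow_length_le [G.LocallyFinite] {D : ℕ} (hdeg : ∀ u, G.degree u ≤ D)
    {q : ℝ} (hq : 0 ≤ q) (hDq : D * q < 1) (u v : V) :
    ∑' p : G.Walk u v, q ^ p.length ≤ (1 - D * q)⁻¹ := by
  classical
  have hgeom := summable_geometric_of_lt_one (by positivity) hDq
  rw [← (Equiv.sigmaFiberEquiv fun p : G.Walk u v => p.length).tsum_eq]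
  simp only [Equiv.sigmaFiberEquiv_apply]
  rw [(summable_pow_length_sigma hdeg hq hDq u v).tsum_sigma,
    ← tsum_geometric_of_lt_one (by positivity) hDq]
  exact Summable.tsum_le_tsum (tsum_pow_length_fiber_le hdeg hq u v)
    (summable_pow_length_sigma hdeg hq hDq u v).sigma hgeom

end SimpleGraph

theorem exp_neg_half_le_half {κ : ℝ} (hκ : 2 * log 2 ≤ κ) : exp (-κ / 2) ≤ 1 / 2 :=
  calc exp (-κ / 2) ≤ exp (-log 2) := by gcongr; linarith
    _ = 1 / 2 := by rw [exp_neg, exp_log two_pos, one_div]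

theorem natCast_mul_exp_neg_half_le_half (D : ℕ) {κ : ℝ} (hκ : 2 * log D + 2 * log 2 ≤ κ) :
    D * exp (-κ / 2) ≤ 1 / 2 := by
  calc (D : ℝ) * exp (-κ / 2) ≤ exp (log D) * exp (-κ / 2) := by gcongr; exact le_exp_log _
    _ = exp (-(κ - 2 * log D) / 2) := by rw [← exp_add]; ring_nf
    _ ≤ 1 / 2 := exp_neg_half_le_half (by linarith)

theorem exp_neg_mul_inv_one_sub_le (D : ℕ) {κ : ℝ} (hκ : 2 * log D + 2 * log 2 ≤ κ) :
    exp (-κ) * (1 - D * exp (-κ / 2))⁻¹ ≤ exp (-κ / 2) := by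
  have hq := exp_neg_half_le_half (κ := κ) (by linarith [log_natCast_nonneg D])
  have hDq := natCast_mul_exp_neg_half_le_half D hκ
  have hsq : exp (-κ) = exp (-κ / 2) * exp (-κ / 2) := by rw [← exp_add]; ring_nf
  have hinv : (1 - D * exp (-κ / 2))⁻¹ ≤ 2 := by
    simpa using inv_anti₀ (by norm_num : (0 : ℝ) < 1 / 2)
      (by linarith : 1 / 2 ≤ 1 - D * exp (-κ / 2))
  calc exp (-κ) * (1 - D * exp (-κ / 2))⁻¹ ≤ exp (-κ / 2) * exp (-κ / 2) * 2 := by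
        rw [hsq]; gcongr
    _ ≤ exp (-κ / 2) := by nlinarith [exp_pos (-κ / 2)]

open SimpleGraph in
theorem connected_polymer_sum_general
    {V : Type*} (G : SimpleGraph V) (D : ℕ)
    (hdeg : ∀ v : V, (G.neighborSet v).Finite ∧ (G.neighborSet v).ncard ≤ D)
    (κ : ℝ) (hκ : 4 * Real.log D + 2 * Real.log 2 ≤ κ) (v : V) :
    Summable (fun X : {X : Finset V // v ∈ X ∧ (G.induce (X : Set V)).Connected} =>
      Real.exp (-κ * (X.1.card : ℝ))) ∧
    ∑' X : {X : Finset V // v ∈ X ∧ (G.induce (X : Set V)).Connected},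
      Real.exp (-κ * (X.1.card : ℝ)) ≤ Real.exp (-κ / 2) := by
  let : G.LocallyFinite := fun u => (hdeg u).1.fintype
  have hdegD : ∀ u, G.degree u ≤ D := fun u => by
    rw [← card_neighborSet_eq_degree, ← Nat.card_eq_fintype_card, Nat.card_coe_set_eq]
    exact (hdeg u).2
  have hκ' : 2 * log D + 2 * log 2 ≤ κ := by linarith [log_natCast_nonneg D]
  set q := exp (-κ / 2)
  have hq : 0 ≤ q := (exp_pos _).le
  have hDq : D * q < 1 := by linarith [natCast_mul_exp_neg_half_le_half D hκ']
  choose c hc hlen using fun X : {X : Finset V // v ∈ X ∧ (G.induce (X : Set V)).Connected} =>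
    exists_closed_walk_support_eq_of_connected_induce X.2.1 X.2.2
  have hinj : Function.Injective c := fun X Y hXY =>
    Subtype.ext <| Finset.ext fun x => (hc X x).symm.trans (hXY ▸ hc Y x)
  have hweight : ∀ X, exp (-κ * (X.1.card : ℝ)) = exp (-κ) * q ^ (c X).length := fun X => by
    have hcard : (X.1.card : ℝ) = ((c X).length + 2) / 2 := by
      rw [eq_div_iff two_ne_zero, mul_comm]; exact_mod_cast (hlen X).symm
    rw [← exp_nat_mul, ← exp_add, hcard]
    ring_nf
  have hsum := (summable_pow_length hdegD hq hDq v v).comp_injective hinj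
  simp_rw [hweight]
  refine ⟨hsum.mul_left _, ?_⟩
  calc ∑' X, exp (-κ) * q ^ (c X).length = exp (-κ) * ∑' X, q ^ (c X).length := tsum_mul_left
    _ ≤ exp (-κ) * ∑' p : G.Walk v v, q ^ p.length := by
        gcongr
        exact tsum_comp_le_tsum_of_inj (summable_pow_length hdegD hq hDq v v)
          (fun _ => by positivity) hinj
    _ ≤ exp (-κ) * (1 - D * q)⁻¹ := by gcongr; exact tsum_pow_length_le hdegD hq hDq v v
    _ ≤ q := exp_neg_mul_inv_one_sub_le D hκ'

/-- Connected polymer sum (Lemma D.1 of the paper): in a graph in which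
every vertex has at most `D ≥ 1` neighbours, if `κ ≥ 4 log D + 2 log 2` then for every
vertex `v` the sum of `exp(−κ|X|)` over all connected finite vertex sets `X` containing `v`
converges and is at most `exp(−κ/2)`. -/
theorem connected_polymer_sum
    {V : Type*} (G : SimpleGraph V) (D : ℕ) (hD : 1 ≤ D)
    (hdeg : ∀ v : V, (G.neighborSet v).Finite ∧ (G.neighborSet v).ncard ≤ D)
    (κ : ℝ) (hκ : 4 * Real.log D + 2 * Real.log 2 ≤ κ) (v : V) :
    Summable (fun X : {X : Finset V // v ∈ X ∧ (G.induce (X : Set V)).Connected} =>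
      Real.exp (-κ * (X.1.card : ℝ))) ∧
    ∑' X : {X : Finset V // v ∈ X ∧ (G.induce (X : Set V)).Connected},
      Real.exp (-κ * (X.1.card : ℝ)) ≤ Real.exp (-κ / 2) :=
  connected_polymer_sum_general G D hdeg κ hκ v
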